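/- arXiv:2605.21692 — 5 statements merged into one kernel-verified Lean document; each statement's English description precedes it below -/
import Mathlib

section
/- Let (X, d_X) and (Y, d_Y) be metric spaces, let μ be a Borel probability measure on X, let y : X → Y be a target function, and let f : X → Y be L-Lipschitz for some L ≥ 0 (i.e. d_Y(f x, f x') ≤ L · d_X(x, x') for all x, x'). Define the additively separable cost ℓ((x,u),(x',u')) = d_X(x,x') + d_Y(u,u') on X × Y. Then for every x ∈ X one has inf_{x'∈X} ℓ((x, y x), (x', f x')) ≤ d_Y(y x, f x) and d_Y(y x, f x) ≤ (1+L) · inf_{x'∈X} ℓ((x, y x), (x', f x')). Consequently, (1/(1+L)) · ∫ d_Y(y x, f x) dμ(x) ≤ ∫ inf_{x'∈X} ℓ((x, y x), (x', f x')) dμ(x) ≤ ∫ d_Y(y x, f x) dμ(x), where the integrals are Lebesgue integrals of the (nonnegative) integrands, assumed μ-measurable. -/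
open MeasureTheory

section GraphDistance

variable {X Y : Type*} [PseudoMetricSpace X] [PseudoMetricSpace Y]

theorem iInf_dist_add_dist_le (u : Y) (f : X → Y) (x : X) :
    ⨅ x' : X, (dist x x' + dist u (f x')) ≤ dist u (f x) := by
  have hbdd : BddBelow (Set.range fun x' : X => dist x x' + dist u (f x')) :=
    ⟨0, by rintro _ ⟨x', rfl⟩; positivity⟩
  simpa using ciInf_le hbdd x

theorem dist_le_one_add_mul_iInf_dist_add_dist (u : Y) {f : X → Y} {L : ℝ} (hL : 0 ≤ L)
    (hf : ∀ x x' : X, dist (f x) (f x') ≤ L * dist x x') (x : X) :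
    dist u (f x) ≤ (1 + L) * ⨅ x' : X, (dist x x' + dist u (f x')) := by
  have h1L : 0 < 1 + L := by linarith
  have : Nonempty X := ⟨x⟩
  rw [← div_le_iff₀' h1L]
  refine le_ciInf fun x' => (div_le_iff₀ h1L).2 ?_
  calc dist u (f x) ≤ dist u (f x') + dist (f x') (f x) := dist_triangle _ _ _
    _ ≤ dist u (f x') + L * dist x x' := by
        rw [dist_comm x x']; exact add_le_add_right (hf x' x) _
    _ ≤ (dist x x' + dist u (f x')) * (1 + L) := by
        nlinarith [dist_nonneg (x := x) (y := x'), dist_nonneg (x := u) (y := f x')]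

end GraphDistance

theorem ofReal_one_div_mul_lintegral_le {α : Type*} [MeasurableSpace α] (μ : Measure α)
    {g h : α → ℝ} {c : ℝ} (hgh : ∀ a, g a ≤ c * h a) :
    ENNReal.ofReal (1 / c) * ∫⁻ a, ENNReal.ofReal (g a) ∂μ ≤ ∫⁻ a, ENNReal.ofReal (h a) ∂μ := by
  rcases le_or_gt c 0 with hc | hc
  · rw [ENNReal.ofReal_of_nonpos (one_div_nonpos.2 hc), zero_mul]
    exact zero_le
  rw [← lintegral_const_mul' _ _ ENNReal.ofReal_ne_top]
  refine lintegral_mono fun a => ?_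
  rw [← ENNReal.ofReal_mul (by positivity), one_div, inv_mul_eq_div]
  exact ENNReal.ofReal_le_ofReal ((div_le_iff₀' hc).2 (hgh a))

theorem stmt_0_general
    {X Y : Type*} [MetricSpace X] [MetricSpace Y]
    [MeasurableSpace X]
    (μ : Measure X)
    (y f : X → Y) (L : ℝ) (hL : 0 ≤ L)
    (hf : ∀ x x' : X, dist (f x) (f x') ≤ L * dist x x') :
    (∀ x : X,
        (⨅ x' : X, (dist x x' + dist (y x) (f x'))) ≤ dist (y x) (f x) ∧
        dist (y x) (f x) ≤ (1 + L) * ⨅ x' : X, (dist x x' + dist (y x) (f x'))) ∧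
    ENNReal.ofReal (1 / (1 + L)) * (∫⁻ x, ENNReal.ofReal (dist (y x) (f x)) ∂μ)
        ≤ (∫⁻ x, ENNReal.ofReal (⨅ x' : X, (dist x x' + dist (y x) (f x'))) ∂μ) ∧
    (∫⁻ x, ENNReal.ofReal (⨅ x' : X, (dist x x' + dist (y x) (f x'))) ∂μ)
        ≤ ∫⁻ x, ENNReal.ofReal (dist (y x) (f x)) ∂μ := by
  have hgap_le x := iInf_dist_add_dist_le (y x) f x
  have hle_gap x := dist_le_one_add_mul_iInf_dist_add_dist (y x) hL hf x
  exact ⟨fun x => ⟨hgap_le x, hle_gap x⟩, ofReal_one_div_mul_lintegral_le μ hle_gap,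
    lintegral_mono fun x => ENNReal.ofReal_le_ofReal (hgap_le x)⟩

/-- **Representation gap vs generalization error.**
For metric spaces `X`, `Y`, a Borel probability measure `μ` on `X`, a target `y : X → Y`
and an `L`-Lipschitz model `f : X → Y`, with the additively separable cost
`ℓ((x,u),(x',u')) = d_X(x,x') + d_Y(u,u')`, one has pointwise
`inf_{x'} ℓ((x, y x), (x', f x')) ≤ d_Y(y x, f x) ≤ (1+L) · inf_{x'} ℓ((x, y x), (x', f x'))`,
and consequently the corresponding inequalities between the Lebesgue integrals. -/
theorem stmt_0
    {X Y : Type*} [MetricSpace X] [MetricSpace Y]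
    [MeasurableSpace X] [BorelSpace X]
    (μ : Measure X) [IsProbabilityMeasure μ]
    (y f : X → Y) (L : ℝ) (hL : 0 ≤ L)
    (hf : ∀ x x' : X, dist (f x) (f x') ≤ L * dist x x')
    (hmeas₁ : Measurable fun x : X => ⨅ x' : X, (dist x x' + dist (y x) (f x')))
    (hmeas₂ : Measurable fun x : X => dist (y x) (f x)) :
    (∀ x : X,
        (⨅ x' : X, (dist x x' + dist (y x) (f x'))) ≤ dist (y x) (f x) ∧
        dist (y x) (f x) ≤ (1 + L) * ⨅ x' : X, (dist x x' + dist (y x) (f x'))) ∧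
    ENNReal.ofReal (1 / (1 + L)) * (∫⁻ x, ENNReal.ofReal (dist (y x) (f x)) ∂μ)
        ≤ (∫⁻ x, ENNReal.ofReal (⨅ x' : X, (dist x x' + dist (y x) (f x'))) ∂μ) ∧
    (∫⁻ x, ENNReal.ofReal (⨅ x' : X, (dist x x' + dist (y x) (f x'))) ∂μ)
        ≤ ∫⁻ x, ENNReal.ofReal (dist (y x) (f x)) ∂μ :=
  stmt_0_general μ y f L hL hf
end

section
/- Let (X, d_X) and (Y, d_Y) be metric spaces, let μ be a Borel probability measure on X, and let y : X → Y be L-Lipschitz for some L ≥ 0. Let D ⊆ X be a finite nonempty set and let f : X → Y be any function that interpolates y on D, i.e. f(x') = y(x') for all x' ∈ D. Define ℓ((x,u),(x',u')) = d_X(x,x') + d_Y(u,u'). Then for every x ∈ X, inf_{x'∈X} ℓ((x, y x), (x', f x')) ≤ (1+L) · min_{x'∈D} d_X(x, x'), and consequently ∫ inf_{x'∈X} ℓ((x, y x), (x', f x')) dμ(x) ≤ (1+L) · ∫ min_{x'∈D} d_X(x, x') dμ(x). -/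
open MeasureTheory

theorem lintegral_ofReal_le_ofReal_mul_of_le {α : Type*} [MeasurableSpace α] (μ : Measure α)
    {g h : α → ℝ} {c : ℝ} (hc : 0 ≤ c) (hgh : ∀ x, g x ≤ c * h x) :
    ∫⁻ x, ENNReal.ofReal (g x) ∂μ ≤ ENNReal.ofReal c * ∫⁻ x, ENNReal.ofReal (h x) ∂μ :=
  calc ∫⁻ x, ENNReal.ofReal (g x) ∂μ
      ≤ ∫⁻ x, ENNReal.ofReal c * ENNReal.ofReal (h x) ∂μ :=
        lintegral_mono fun x => (ENNReal.ofReal_le_ofReal (hgh x)).trans_eq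
          (ENNReal.ofReal_mul hc)
    _ = ENNReal.ofReal c * ∫⁻ x, ENNReal.ofReal (h x) ∂μ :=
        lintegral_const_mul' _ _ ENNReal.ofReal_ne_top

section GraphGap

variable {X Y : Type*} [MetricSpace X] [MetricSpace Y] {y f : X → Y} {L : ℝ}

theorem iInf_dist_add_dist_le_of_eq (hy : ∀ x x' : X, dist (y x) (y x') ≤ L * dist x x')
    (x : X) {x₀ : X} (hx₀ : f x₀ = y x₀) :
    ⨅ x' : X, (dist x x' + dist (y x) (f x')) ≤ (1 + L) * dist x x₀ := by
  have hbdd : BddBelow (Set.range fun x' : X => dist x x' + dist (y x) (f x')) :=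
    ⟨0, by rintro _ ⟨x', rfl⟩; positivity⟩
  calc ⨅ x' : X, (dist x x' + dist (y x) (f x'))
      ≤ dist x x₀ + dist (y x) (f x₀) := ciInf_le hbdd x₀
    _ = dist x x₀ + dist (y x) (y x₀) := by rw [hx₀]
    _ ≤ (1 + L) * dist x x₀ := by linarith [hy x x₀]

theorem iInf_dist_add_dist_le_inf' (hy : ∀ x x' : X, dist (y x) (y x') ≤ L * dist x x')
    {D : Finset X} (hD : D.Nonempty) (hf : ∀ x' ∈ D, f x' = y x') (x : X) :
    ⨅ x' : X, (dist x x' + dist (y x) (f x')) ≤ (1 + L) * D.inf' hD (fun x' => dist x x') := by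
  obtain ⟨x₀, hx₀, hmin⟩ := D.exists_mem_eq_inf' hD (fun x' => dist x x')
  rw [hmin]
  exact iInf_dist_add_dist_le_of_eq hy x (hf x₀ hx₀)

end GraphGap

theorem stmt_1_general
    {X Y : Type*} [MetricSpace X] [MetricSpace Y]
    [MeasurableSpace X]
    (μ : Measure X)
    (y : X → Y) (L : ℝ) (hL : 0 ≤ L)
    (hy : ∀ x x' : X, dist (y x) (y x') ≤ L * dist x x')
    (D : Finset X) (hD : D.Nonempty)
    (f : X → Y) (hf : ∀ x' ∈ D, f x' = y x') :
    (∀ x : X,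
        (⨅ x' : X, (dist x x' + dist (y x) (f x'))) ≤
          (1 + L) * D.inf' hD (fun x' => dist x x')) ∧
    (∫⁻ x, ENNReal.ofReal (⨅ x' : X, (dist x x' + dist (y x) (f x'))) ∂μ)
        ≤ ENNReal.ofReal (1 + L) *
            ∫⁻ x, ENNReal.ofReal (D.inf' hD (fun x' => dist x x')) ∂μ :=
  have hgap := iInf_dist_add_dist_le_inf' hy hD hf
  ⟨hgap, lintegral_ofReal_le_ofReal_mul_of_le μ (by linarith) hgap⟩

/-- **Representation gap bounded by nearest-neighbor error.**
If the target `y : X → Y` is `L`-Lipschitz, `D ⊆ X` is a finite nonempty training set, and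
`f : X → Y` interpolates `y` on `D`, then for every `x`,
`inf_{x'∈X} ℓ((x, y x), (x', f x')) ≤ (1+L) · min_{x'∈D} d_X(x,x')`,
where `ℓ((x,u),(x',u')) = d_X(x,x') + d_Y(u,u')`; consequently the integrated
representation gap is bounded by `(1+L)` times the integrated nearest-neighbor error. -/
theorem stmt_1
    {X Y : Type*} [MetricSpace X] [MetricSpace Y]
    [MeasurableSpace X] [BorelSpace X]
    (μ : Measure X) [IsProbabilityMeasure μ]
    (y : X → Y) (L : ℝ) (hL : 0 ≤ L)
    (hy : ∀ x x' : X, dist (y x) (y x') ≤ L * dist x x')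
    (D : Finset X) (hD : D.Nonempty)
    (f : X → Y) (hf : ∀ x' ∈ D, f x' = y x') :
    (∀ x : X,
        (⨅ x' : X, (dist x x' + dist (y x) (f x'))) ≤
          (1 + L) * D.inf' hD (fun x' => dist x x')) ∧
    (∫⁻ x, ENNReal.ofReal (⨅ x' : X, (dist x x' + dist (y x) (f x'))) ∂μ)
        ≤ ENNReal.ofReal (1 + L) *
            ∫⁻ x, ENNReal.ofReal (D.inf' hD (fun x' => dist x x')) ∂μ :=
  stmt_1_general μ y L hL hy D hD f hf
end

section
/- Fix d ≥ 1 and let U_d be the uniform distribution on [0,1]^d. There exist constants 0 < c ≤ C (depending only on d) such that for every n ≥ 1, c · n^{−2/d} ≤ R_n(U_d) ≤ C · n^{−2/d}; in particular one may take c = (1/2)·(2 V_d n)^{−2/d}·n^{2/d}·n^{−2/d}, i.e. R_n(U_d) ≥ (1/2)·(2 V_d n)^{−2/d} for all n. Consequently the Zador constant J*_d = inf_{n≥1} n^{2/d} R_n(U_d) satisfies 0 < J*_d < ∞. -/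
/-!
Lower bound: `n` balls of radius `r` have total volume at most `n V_d r^d`; for
`n V_d r^d = 1/2` at least half of the cube lies at squared distance `≥ r²` from all `n` centres.
Upper bound: for `m = ⌊n^{1/d}⌋` the `m^d` midpoints of the subcubes of side `1/m` lie within
squared distance `d/(4m²)` of every point of the cube, and `4m² ≥ n^{2/d}`.
-/

open MeasureTheory

/-- The `n`-point quantization error of a Borel measure `P` on `ℝ^d` with squared
Euclidean cost: `R_n(P) = inf_{(z_1,…,z_n)} ∫ min_k ‖y − z_k‖² dP(y)`. -/
noncomputable def quantError (d n : ℕ) (P : Measure (EuclideanSpace ℝ (Fin d))) : ℝ :=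
  ⨅ z : Fin n → EuclideanSpace ℝ (Fin d),
    (∫⁻ y, ENNReal.ofReal (⨅ k : Fin n, ‖y - z k‖ ^ 2) ∂P).toReal

/-- The unit cube `[0,1]^d ⊂ ℝ^d`. -/
def unitCube (d : ℕ) : Set (EuclideanSpace ℝ (Fin d)) :=
  {x : EuclideanSpace ℝ (Fin d) | WithLp.ofLp x ∈ Set.univ.pi fun _ => Set.Icc (0 : ℝ) 1}

/-- The uniform distribution on the unit cube `[0,1]^d`. -/
noncomputable def uniformCube (d : ℕ) : Measure (EuclideanSpace ℝ (Fin d)) :=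
  volume.restrict (unitCube d)

/-- The Zador constant `J*_d = inf_{n ≥ 1} n^{2/d} R_n(U_d)`. -/
noncomputable def zadorConst (d : ℕ) : ℝ :=
  ⨅ n : {n : ℕ // 1 ≤ n}, ((n : ℕ) : ℝ) ^ ((2 : ℝ) / d) * quantError d n (uniformCube d)

/-- `V_d = π^{d/2} / Γ(d/2 + 1)`, the volume of the Euclidean unit ball in `ℝ^d`. -/
noncomputable def ballVol (d : ℕ) : ℝ :=
  Real.pi ^ ((d : ℝ) / 2) / Real.Gamma ((d : ℝ) / 2 + 1)

open Metric Set ENNReal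

section QuantizationCost

variable {E ι : Type*} [NormedAddCommGroup E] [MeasurableSpace E] [OpensMeasurableSpace E]
  [Nonempty ι]

theorem ofReal_sq_mul_sub_sum_measure_ball_le_lintegral [Fintype ι] (μ : Measure E) (z : ι → E)
    {r : ℝ} (hr : 0 ≤ r) :
    ENNReal.ofReal (r ^ 2) * (μ univ - ∑ k, μ (ball (z k) r))
      ≤ ∫⁻ y, ENNReal.ofReal (⨅ k, ‖y - z k‖ ^ 2) ∂μ := by
  set B := ⋃ k, ball (z k) r
  have h_far (y : E) (hy : y ∉ B) : r ^ 2 ≤ ⨅ k, ‖y - z k‖ ^ 2 := by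
    simp only [B, mem_iUnion, mem_ball, dist_eq_norm, not_exists, not_lt] at hy
    exact le_ciInf fun k => pow_le_pow_left₀ hr (hy k) 2
  calc ENNReal.ofReal (r ^ 2) * (μ univ - ∑ k, μ (ball (z k) r))
      ≤ ENNReal.ofReal (r ^ 2) * μ Bᶜ := by
        gcongr
        calc μ univ - ∑ k, μ (ball (z k) r) ≤ μ univ - μ B :=
              tsub_le_tsub_left (measure_iUnion_fintype_le μ _) _
          _ ≤ μ (univ \ B) := le_measure_sdiff
          _ = μ Bᶜ := by rw [compl_eq_univ_sdiff]
    _ = ∫⁻ y, Bᶜ.indicator (fun _ => ENNReal.ofReal (r ^ 2)) y ∂μ :=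
        (lintegral_indicator_const (isOpen_iUnion fun _ => isOpen_ball).measurableSet.compl _).symm
    _ ≤ ∫⁻ y, ENNReal.ofReal (⨅ k, ‖y - z k‖ ^ 2) ∂μ := lintegral_mono fun y => by
        by_cases hy : y ∈ B
        · simp [hy]
        · simpa [hy] using ENNReal.ofReal_le_ofReal (h_far y hy)

theorem setLIntegral_iInf_sq_norm_sub_lt_top (μ : Measure E)
    [IsFiniteMeasureOnCompacts μ] {K : Set E} (hK : IsCompact K) (z : ι → E) :
    ∫⁻ y in K, ENNReal.ofReal (⨅ k, ‖y - z k‖ ^ 2) ∂μ < ∞ := by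
  obtain ⟨k₀⟩ := ‹Nonempty ι›
  have h_int : IntegrableOn (fun y => ‖y - z k₀‖ ^ 2) K μ :=
    ContinuousOn.integrableOn_compact hK (by fun_prop)
  refine lt_of_le_of_lt (lintegral_mono fun y => ENNReal.ofReal_le_ofReal ?_) h_int.lintegral_lt_top
  exact ciInf_le ⟨0, by rintro _ ⟨k, rfl⟩; positivity⟩ k₀

end QuantizationCost

section QuantError

variable {d n : ℕ} {P : Measure (EuclideanSpace ℝ (Fin d))}

theorem quantError_nonneg : 0 ≤ quantError d n P :=
  Real.iInf_nonneg fun _ => ENNReal.toReal_nonneg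

theorem le_quantError_of_forall_le_lintegral {a : ℝ}
    (h_fin : ∀ z : Fin n → EuclideanSpace ℝ (Fin d),
      ∫⁻ y, ENNReal.ofReal (⨅ k, ‖y - z k‖ ^ 2) ∂P ≠ ∞)
    (h_le : ∀ z : Fin n → EuclideanSpace ℝ (Fin d),
      ENNReal.ofReal a ≤ ∫⁻ y, ENNReal.ofReal (⨅ k, ‖y - z k‖ ^ 2) ∂P) :
    a ≤ quantError d n P :=
  le_ciInf fun z => (ENNReal.ofReal_le_iff_le_toReal (h_fin z)).1 (h_le z)

theorem quantError_le_of_lintegral_le {ι : Type*} [Fintype ι] [Nonempty ι]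
    (h_card : Fintype.card ι ≤ n) (w : ι → EuclideanSpace ℝ (Fin d)) {b : ℝ} (hb : 0 ≤ b)
    (h_le : ∫⁻ y, ENNReal.ofReal (⨅ i, ‖y - w i‖ ^ 2) ∂P ≤ ENNReal.ofReal b) :
    quantError d n P ≤ b := by
  obtain ⟨e⟩ := Function.Embedding.nonempty_of_card_le (h_card.trans_eq (Fintype.card_fin n).symm)
  have h_surj : Function.Surjective (Function.invFun e) := Function.invFun_surjective e.injective
  have h_same (y : EuclideanSpace ℝ (Fin d)) :
      ⨅ k, ‖y - w (Function.invFun e k)‖ ^ 2 = ⨅ i, ‖y - w i‖ ^ 2 := by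
    simp only [iInf, ← h_surj.range_comp (fun i => ‖y - w i‖ ^ 2)]
    rfl
  refine (ciInf_le ⟨0, ?_⟩ (w ∘ Function.invFun e)).trans ?_
  · rintro _ ⟨z, rfl⟩
    exact ENNReal.toReal_nonneg
  · simpa only [Function.comp_apply, h_same] using ENNReal.toReal_le_of_le_ofReal hb h_le

end QuantError

section UnitCube

theorem isCompact_unitCube (d : ℕ) : IsCompact (unitCube d) :=
  (PiLp.homeomorph 2 fun _ : Fin d => ℝ).isCompact_preimage.2
    (isCompact_univ_pi fun _ => isCompact_Icc)

theorem volume_unitCube (d : ℕ) : volume (unitCube d) = 1 := by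
  have h := (EuclideanSpace.volume_preserving_symm_measurableEquiv_toLp (Fin d)).measure_preimage
    (MeasurableSet.univ_pi fun _ => measurableSet_Icc (a := (0 : ℝ)) (b := 1)).nullMeasurableSet
  change volume (unitCube d) = _ at h
  rw [h, volume_pi_pi]
  simp [Real.volume_Icc]

instance (d : ℕ) : IsProbabilityMeasure (uniformCube d) :=
  ⟨by rw [uniformCube, Measure.restrict_apply_univ, volume_unitCube]⟩

theorem ballVol_pos (d : ℕ) : 0 < ballVol d :=
  div_pos (Real.rpow_pos_of_pos Real.pi_pos _) (Real.Gamma_pos_of_pos (by positivity))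

theorem volume_ball_eq_ballVol_mul {d : ℕ} (hd : 1 ≤ d) (x : EuclideanSpace ℝ (Fin d)) {r : ℝ}
    (hr : 0 ≤ r) : volume (ball x r) = ENNReal.ofReal (ballVol d * r ^ d) := by
  have : Nonempty (Fin d) := ⟨⟨0, hd⟩⟩
  have h_pi : Real.sqrt Real.pi ^ d = Real.pi ^ ((d : ℝ) / 2) := by
    rw [Real.sqrt_eq_rpow, ← Real.rpow_mul_natCast Real.pi_pos.le]
    ring_nf
  rw [EuclideanSpace.volume_ball, Fintype.card_fin, h_pi, ← ballVol, ← ENNReal.ofReal_pow hr,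
    ← ENNReal.ofReal_mul (by positivity), mul_comm]

end UnitCube

section LowerBound

variable {d n : ℕ}

theorem ofReal_sq_mul_le_lintegral_uniformCube (hd : 1 ≤ d) (hn : 1 ≤ n)
    (z : Fin n → EuclideanSpace ℝ (Fin d)) {r : ℝ} (hr : 0 ≤ r) :
    ENNReal.ofReal (r ^ 2 * (1 - n * (ballVol d * r ^ d)))
      ≤ ∫⁻ y, ENNReal.ofReal (⨅ k, ‖y - z k‖ ^ 2) ∂uniformCube d := by
  have : Nonempty (Fin n) := ⟨⟨0, hn⟩⟩
  refine le_trans ?_ (ofReal_sq_mul_sub_sum_measure_ball_le_lintegral _ z hr)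
  have h_balls : ∑ k, uniformCube d (ball (z k) r) ≤ ENNReal.ofReal (n * (ballVol d * r ^ d)) :=
    calc ∑ k, uniformCube d (ball (z k) r) ≤ ∑ k, volume (ball (z k) r) :=
          Finset.sum_le_sum fun k _ => Measure.restrict_apply_le _ _
      _ = ENNReal.ofReal (n * (ballVol d * r ^ d)) := by
          rw [ENNReal.ofReal_mul (Nat.cast_nonneg n), ENNReal.ofReal_natCast]
          simp [volume_ball_eq_ballVol_mul hd _ hr]
  rw [ENNReal.ofReal_mul (sq_nonneg r), measure_univ,
    ENNReal.ofReal_sub _ (by have := ballVol_pos d; positivity), ENNReal.ofReal_one]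
  gcongr

theorem half_mul_rpow_le_quantError_uniformCube (hd : 1 ≤ d) (hn : 1 ≤ n) :
    (1 / 2 : ℝ) * (2 * ballVol d * n) ^ (-(2 : ℝ) / d) ≤ quantError d n (uniformCube d) := by
  have hV := ballVol_pos d
  have hx : 0 < 2 * ballVol d * n := by positivity
  obtain ⟨r, hr, hr_sq, h_half⟩ : ∃ r : ℝ, 0 ≤ r ∧ r ^ 2 = (2 * ballVol d * n) ^ (-(2 : ℝ) / d) ∧
      n * (ballVol d * r ^ d) = 1 / 2 := by
    refine ⟨(2 * ballVol d * n) ^ (-(1 : ℝ) / d), Real.rpow_nonneg hx.le _, ?_, ?_⟩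
    · rw [← Real.rpow_mul_natCast hx.le]
      ring_nf
    · rw [← Real.rpow_mul_natCast hx.le, div_mul_cancel₀ _ (by positivity), Real.rpow_neg_one]
      field_simp
  have : Nonempty (Fin n) := ⟨⟨0, hn⟩⟩
  refine le_quantError_of_forall_le_lintegral (fun z => ?_) (fun z => ?_)
  · exact (setLIntegral_iInf_sq_norm_sub_lt_top _ (isCompact_unitCube d) z).ne
  · convert ofReal_sq_mul_le_lintegral_uniformCube hd hn z hr using 2
    rw [h_half, hr_sq]
    ring

end LowerBound

section UpperBound

theorem exists_abs_sub_midpoint_le {m : ℕ} (hm : 1 ≤ m) {t : ℝ} (ht : t ∈ Icc (0 : ℝ) 1) :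
    ∃ j : Fin m, |t - ((j : ℝ) + 1 / 2) / m| ≤ 1 / (2 * m) := by
  have hm' : (0 : ℝ) < m := by exact_mod_cast hm
  obtain ⟨j, hj, hj_le, hj_ge⟩ : ∃ j : ℕ, j < m ∧ (j : ℝ) ≤ t * m ∧ t * m ≤ j + 1 := by
    rcases lt_or_ge (t * m) m with h | h
    · exact ⟨⌊t * m⌋₊, (Nat.floor_lt (by nlinarith [ht.1])).2 h,
        Nat.floor_le (by nlinarith [ht.1]), (Nat.lt_floor_add_one _).le⟩
    · refine ⟨m - 1, by omega, ?_, ?_⟩ <;> push_cast [Nat.cast_sub hm] <;> nlinarith [ht.2]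
  refine ⟨⟨j, hj⟩, ?_⟩
  have h_eq : t - ((j : ℝ) + 1 / 2) / m = (t * m - j - 1 / 2) / m := by
    field_simp
    ring
  rw [h_eq, abs_div, abs_of_pos hm', div_mul_eq_div_div, div_le_div_iff_of_pos_right hm', abs_le]
  constructor <;> linarith

noncomputable def cubeGrid (d m : ℕ) (j : Fin d → Fin m) : EuclideanSpace ℝ (Fin d) :=
  WithLp.toLp 2 fun i => ((j i : ℝ) + 1 / 2) / m

theorem exists_sq_norm_sub_cubeGrid_le {d m : ℕ} (hm : 1 ≤ m) {y : EuclideanSpace ℝ (Fin d)}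
    (hy : y ∈ unitCube d) : ∃ j, ‖y - cubeGrid d m j‖ ^ 2 ≤ d / (4 * m ^ 2) := by
  choose j hj using fun i => exists_abs_sub_midpoint_le hm (hy i (mem_univ i))
  refine ⟨j, ?_⟩
  rw [EuclideanSpace.norm_sq_eq]
  calc ∑ i, ‖(y - cubeGrid d m j) i‖ ^ 2 ≤ ∑ _i : Fin d, (1 / (2 * m : ℝ)) ^ 2 :=
        Finset.sum_le_sum fun i _ => pow_le_pow_left₀ (norm_nonneg _) (hj i) 2
    _ = d / (4 * m ^ 2) := by
        simp only [Finset.sum_const, Finset.card_univ, Fintype.card_fin, nsmul_eq_mul]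
        ring

theorem quantError_uniformCube_le_of_pow_le {d m n : ℕ} (hm : 1 ≤ m) (hmn : m ^ d ≤ n) :
    quantError d n (uniformCube d) ≤ d / (4 * m ^ 2) := by
  have : Nonempty (Fin m) := ⟨⟨0, hm⟩⟩
  refine quantError_le_of_lintegral_le (by simpa using hmn) (cubeGrid d m) (by positivity) ?_
  calc ∫⁻ y, ENNReal.ofReal (⨅ j, ‖y - cubeGrid d m j‖ ^ 2) ∂uniformCube d
      ≤ ∫⁻ _ in unitCube d, ENNReal.ofReal (d / (4 * m ^ 2)) := by
        refine setLIntegral_mono' (isCompact_unitCube d).isClosed.measurableSet fun y hy => ?_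
        obtain ⟨j, hj⟩ := exists_sq_norm_sub_cubeGrid_le hm hy
        exact ENNReal.ofReal_le_ofReal ((ciInf_le ⟨0, by rintro _ ⟨_, rfl⟩; positivity⟩ j).trans hj)
    _ = ENNReal.ofReal (d / (4 * m ^ 2)) := by rw [setLIntegral_const, volume_unitCube, mul_one]

theorem quantError_uniformCube_le_mul_rpow {d n : ℕ} (hd : 1 ≤ d) (hn : 1 ≤ n) :
    quantError d n (uniformCube d) ≤ d * (n : ℝ) ^ (-(2 : ℝ) / d) := by
  have hn' : (1 : ℝ) ≤ n := by exact_mod_cast hn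
  set x := (n : ℝ) ^ ((1 : ℝ) / d)
  have hx : 1 ≤ x := Real.one_le_rpow hn' (by positivity)
  set m := ⌊x⌋₊
  have hm : 1 ≤ m := Nat.le_floor (by exact_mod_cast hx)
  have hmx : (m : ℝ) ≤ x := Nat.floor_le (by positivity)
  have hx_pow : x ^ d = n := by
    rw [← Real.rpow_mul_natCast (by positivity), one_div_mul_cancel (by positivity), Real.rpow_one]
  have hmn : m ^ d ≤ n := by
    exact_mod_cast (pow_le_pow_left₀ (Nat.cast_nonneg m) hmx d).trans_eq hx_pow
  have hx_le : x ≤ 2 * m := by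
    have : (1 : ℝ) ≤ m := by exact_mod_cast hm
    linarith [Nat.lt_floor_add_one x]
  have h_rpow : (n : ℝ) ^ (-(2 : ℝ) / d) = (x ^ 2)⁻¹ := by
    rw [← Real.rpow_mul_natCast (by positivity), ← Real.rpow_neg (by positivity)]
    ring_nf
  refine (quantError_uniformCube_le_of_pow_le hm hmn).trans ?_
  rw [h_rpow, div_eq_mul_inv]
  gcongr
  nlinarith

end UpperBound

/-- **Two-sided `n^{-2/d}` bounds on the quantization error of the unit cube.**
There are constants `0 < c ≤ C` with `c n^{-2/d} ≤ R_n(U_d) ≤ C n^{-2/d}` for all `n ≥ 1`;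
moreover `R_n(U_d) ≥ (1/2)(2 V_d n)^{-2/d}` for all `n ≥ 1`. Consequently the Zador
constant `J*_d = inf_{n≥1} n^{2/d} R_n(U_d)` is positive and finite. -/
theorem stmt_3 (d : ℕ) (hd : 1 ≤ d) :
    ∃ c C : ℝ, 0 < c ∧ c ≤ C ∧
      (∀ n : ℕ, 1 ≤ n →
        c * (n : ℝ) ^ (-(2 : ℝ) / d) ≤ quantError d n (uniformCube d) ∧
        quantError d n (uniformCube d) ≤ C * (n : ℝ) ^ (-(2 : ℝ) / d)) ∧
      (∀ n : ℕ, 1 ≤ n →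
        (1 / 2 : ℝ) * (2 * ballVol d * (n : ℝ)) ^ (-(2 : ℝ) / d)
          ≤ quantError d n (uniformCube d)) ∧
      0 < zadorConst d ∧ zadorConst d ≤ C := by
  have hV := ballVol_pos d
  set c := (1 / 2 : ℝ) * (2 * ballVol d) ^ (-(2 : ℝ) / d)
  have hc : 0 < c := by positivity
  have h_lower (n : ℕ) (hn : 1 ≤ n) :
      c * (n : ℝ) ^ (-(2 : ℝ) / d) ≤ quantError d n (uniformCube d) := by
    have := half_mul_rpow_le_quantError_uniformCube hd hn
    rwa [Real.mul_rpow (by positivity) (Nat.cast_nonneg n), ← mul_assoc] at this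
  have h_upper (n : ℕ) (hn : 1 ≤ n) :
      quantError d n (uniformCube d) ≤ max c d * (n : ℝ) ^ (-(2 : ℝ) / d) :=
    (quantError_uniformCube_le_mul_rpow hd hn).trans (by gcongr; exact le_max_right _ _)
  refine ⟨c, max c d, hc, le_max_left _ _, fun n hn => ⟨h_lower n hn, h_upper n hn⟩,
    fun n hn => half_mul_rpow_le_quantError_uniformCube hd hn, ?_, ?_⟩
  · refine hc.trans_le (le_ciInf fun ⟨n, hn⟩ => ?_)
    have hn' : (0 : ℝ) < n := by exact_mod_cast hn
    calc c = (n : ℝ) ^ ((2 : ℝ) / d) * (c * (n : ℝ) ^ (-(2 : ℝ) / d)) := by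
          rw [mul_left_comm, ← Real.rpow_add hn', neg_div, add_neg_cancel, Real.rpow_zero, mul_one]
      _ ≤ (n : ℝ) ^ ((2 : ℝ) / d) * quantError d n (uniformCube d) := by
          gcongr
          exact h_lower n hn
  · refine ciInf_le_of_le ⟨0, ?_⟩ ⟨1, le_rfl⟩ ?_
    · rintro _ ⟨⟨n, _⟩, rfl⟩
      exact mul_nonneg (by positivity) quantError_nonneg
    · simpa using h_upper 1 le_rfl
end

section
/- Let D ⊂ ℝ^N be a finite nonempty set, and let y ∈ ℝ^N admit a unique nearest point y* in D, i.e. ‖y − y*‖ < ‖y − z‖ for every z ∈ D with z ≠ y*. For α ∈ (0,1) define the softmax weights W_α(z) = exp(−‖y − √α·z‖²/(2(1−α))) / Σ_{z'∈D} exp(−‖y − √α·z'‖²/(2(1−α))) for z ∈ D. Then, as α → 1⁻, W_α(y*) → 1 and W_α(z) → 0 for every z ∈ D with z ≠ y*. -/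
/-!
Subtracting the exponent of `y*` from every exponent leaves the softmax unchanged. For `z ≠ y*` the
new exponent is `-(‖y - √α z‖² - ‖y - √α y*‖²) / (2(1 - α))`, whose numerator tends to
`‖y - z‖² - ‖y - y*‖² > 0` while `1 / (2(1 - α)) → ∞`; so these terms vanish, the `y*` term is
identically `1`, and the denominator tends to `1`.
-/

open Filter Topology

lemma Real.exp_div_sum_exp_sub {ι : Type*} (s : Finset ι) (f : ι → ℝ) (i : ι) (c : ℝ) :
    Real.exp (f i - c) / ∑ j ∈ s, Real.exp (f j - c) =
      Real.exp (f i) / ∑ j ∈ s, Real.exp (f j) := by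
  simp only [Real.exp_sub, ← Finset.sum_div, div_div_div_cancel_right₀ (Real.exp_pos c).ne']

lemma tendsto_exp_div_sum_exp_of_tendsto_sub_atBot {ι α : Type*} [DecidableEq ι] {l : Filter α}
    {s : Finset ι} {f : ι → α → ℝ} {i₀ : ι} (hi₀ : i₀ ∈ s)
    (hf : ∀ i ∈ s, i ≠ i₀ → Tendsto (fun x ↦ f i x - f i₀ x) l atBot) {i : ι} (hi : i ∈ s) :
    Tendsto (fun x ↦ Real.exp (f i x) / ∑ j ∈ s, Real.exp (f j x)) l
      (𝓝 (if i = i₀ then 1 else 0)) := by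
  have hterm : ∀ j ∈ s,
      Tendsto (fun x ↦ Real.exp (f j x - f i₀ x)) l (𝓝 (if j = i₀ then 1 else 0)) := by
    intro j hj
    by_cases hj₀ : j = i₀
    · subst hj₀
      simpa using tendsto_const_nhds
    · rw [if_neg hj₀]
      exact Real.tendsto_exp_atBot.comp (hf j hj hj₀)
  have hsum : Tendsto (fun x ↦ ∑ j ∈ s, Real.exp (f j x - f i₀ x)) l (𝓝 1) := by
    simpa [Finset.sum_ite_eq', hi₀] using tendsto_finsetSum s hterm
  have hratio := (hterm i hi).div hsum one_ne_zero
  rw [div_one] at hratio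
  exact hratio.congr fun x ↦ Real.exp_div_sum_exp_sub s (f · x) i (f i₀ x)

lemma tendsto_inv_two_mul_one_sub_nhdsLT_one :
    Tendsto (fun α : ℝ ↦ (2 * (1 - α))⁻¹) (𝓝[<] 1) atTop := by
  refine tendsto_inv_nhdsGT_zero.comp (tendsto_nhdsWithin_iff.2 ⟨?_, ?_⟩)
  · have h : Continuous (fun α : ℝ ↦ 2 * (1 - α)) := by fun_prop
    simpa using (h.tendsto 1).mono_left nhdsWithin_le_nhds
  · filter_upwards [self_mem_nhdsWithin] with α (hα : α < 1)
    simp only [Set.mem_Ioi]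
    linarith

lemma tendsto_sq_norm_sub_sqrt_smul_sub {E : Type*} [SeminormedAddCommGroup E] [NormedSpace ℝ E]
    (y z w : E) :
    Tendsto (fun α : ℝ ↦ ‖y - Real.sqrt α • z‖ ^ 2 - ‖y - Real.sqrt α • w‖ ^ 2) (𝓝 1)
      (𝓝 (‖y - z‖ ^ 2 - ‖y - w‖ ^ 2)) := by
  have hc : Continuous (fun α : ℝ ↦ ‖y - Real.sqrt α • z‖ ^ 2 - ‖y - Real.sqrt α • w‖ ^ 2) := by
    fun_prop
  simpa using hc.tendsto 1

lemma tendsto_gaussian_exponent_sub_atBot {E : Type*} [SeminormedAddCommGroup E]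
    [NormedSpace ℝ E] {y z w : E} (h : ‖y - w‖ < ‖y - z‖) :
    Tendsto (fun α : ℝ ↦ -(‖y - Real.sqrt α • z‖ ^ 2 / (2 * (1 - α))) -
      -(‖y - Real.sqrt α • w‖ ^ 2 / (2 * (1 - α)))) (𝓝[<] 1) atBot := by
  have hgap : 0 < ‖y - z‖ ^ 2 - ‖y - w‖ ^ 2 := by
    nlinarith [norm_nonneg (y - w)]
  have hdiff := ((tendsto_sq_norm_sub_sqrt_smul_sub y z w).mono_left
    nhdsWithin_le_nhds).pos_mul_atTop hgap tendsto_inv_two_mul_one_sub_nhdsLT_one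
  refine (tendsto_neg_atTop_atBot.comp hdiff).congr fun α ↦ ?_
  simp only [Function.comp_apply]
  ring

theorem stmt_13_general (N : ℕ) (D : Finset (EuclideanSpace ℝ (Fin N)))
    (y ystar : EuclideanSpace ℝ (Fin N)) (hstar : ystar ∈ D)
    (huniq : ∀ z ∈ D, z ≠ ystar → ‖y - ystar‖ < ‖y - z‖) :
    Tendsto
      (fun α : ℝ =>
        Real.exp (-(‖y - Real.sqrt α • ystar‖ ^ 2 / (2 * (1 - α)))) /
          ∑ z' ∈ D, Real.exp (-(‖y - Real.sqrt α • z'‖ ^ 2 / (2 * (1 - α)))))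
      (nhdsWithin 1 (Set.Ioo (0 : ℝ) 1)) (nhds 1) ∧
    ∀ z ∈ D, z ≠ ystar →
      Tendsto
        (fun α : ℝ =>
          Real.exp (-(‖y - Real.sqrt α • z‖ ^ 2 / (2 * (1 - α)))) /
            ∑ z' ∈ D, Real.exp (-(‖y - Real.sqrt α • z'‖ ^ 2 / (2 * (1 - α)))))
        (nhdsWithin 1 (Set.Ioo (0 : ℝ) 1)) (nhds 0) := by
  classical
  have hweight := fun z (hz : z ∈ D) ↦
    (tendsto_exp_div_sum_exp_of_tendsto_sub_atBot
      (f := fun z α ↦ -(‖y - Real.sqrt α • z‖ ^ 2 / (2 * (1 - α)))) hstar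
      (fun z hz hne ↦ tendsto_gaussian_exponent_sub_atBot (huniq z hz hne)) hz).mono_left
      (nhdsWithin_mono 1 (Set.Ioo_subset_Iio_self (a := 0)))
  exact ⟨by simpa using hweight ystar hstar, fun z hz hne ↦ by simpa [hne] using hweight z hz⟩

/-- **Concentration of the diffusion posterior weights at the nearest data point.**
Let `D ⊂ ℝ^N` be a finite nonempty dataset and let `y` have a unique nearest point
`y* ∈ D`. For `α ∈ (0,1)` define the softmax weights
`W_α(z) = exp(−‖y − √α z‖²/(2(1−α))) / Σ_{z'∈D} exp(−‖y − √α z'‖²/(2(1−α)))`.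
Then, as `α → 1⁻`, `W_α(y*) → 1` and `W_α(z) → 0` for every other `z ∈ D`. -/
theorem stmt_13 (N : ℕ) (D : Finset (EuclideanSpace ℝ (Fin N))) (hD : D.Nonempty)
    (y ystar : EuclideanSpace ℝ (Fin N)) (hstar : ystar ∈ D)
    (huniq : ∀ z ∈ D, z ≠ ystar → ‖y - ystar‖ < ‖y - z‖) :
    Tendsto
      (fun α : ℝ =>
        Real.exp (-(‖y - Real.sqrt α • ystar‖ ^ 2 / (2 * (1 - α)))) /
          ∑ z' ∈ D, Real.exp (-(‖y - Real.sqrt α • z'‖ ^ 2 / (2 * (1 - α)))))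
      (nhdsWithin 1 (Set.Ioo (0 : ℝ) 1)) (nhds 1) ∧
    ∀ z ∈ D, z ≠ ystar →
      Tendsto
        (fun α : ℝ =>
          Real.exp (-(‖y - Real.sqrt α • z‖ ^ 2 / (2 * (1 - α)))) /
            ∑ z' ∈ D, Real.exp (-(‖y - Real.sqrt α • z'‖ ^ 2 / (2 * (1 - α)))))
        (nhdsWithin 1 (Set.Ioo (0 : ℝ) 1)) (nhds 0) :=
  stmt_13_general N D y ystar hstar huniq
end

section
/- Let S ⊂ ℝ^N be a nonempty compact set and let μ be a Borel probability measure on ℝ^N with finite second moment (∫ ‖x‖² dμ < ∞). Then the infimum, over all Borel probability measures ν on ℝ^N supported in S and all couplings π of (μ, ν) (Borel probability measures on ℝ^N × ℝ^N with first marginal μ and second marginal ν), of ∫ ‖x − y‖² dπ(x, y), equals ∫ min_{z∈S} ‖x − z‖² dμ(x). In other words, the representation gap of μ relative to S equals the squared 2-Wasserstein-type transport cost from μ to the closest probability measure supported in S. -/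
/-! Under any coupling of `μ` with a measure carried by `S`, `‖x - y‖ ≥ infDist x S` almost
surely, which gives `≥`. Conversely, taking for each `x` the first point `T x` of a countable
dense subset of `S` with `‖x - T x‖ ^ 2 < infDist x S ^ 2 + ε` defines a measurable map, and the
coupling `(id, T)₊μ` costs at most `∫ infDist x S ^ 2 dμ + ε`. -/

open MeasureTheory Metric
open scoped NNReal

section InfDist

variable {E : Type*} [PseudoMetricSpace E] {s : Set E}

theorem exists_dist_sq_lt_infDist_sq_add (hs : s.Nonempty) (x : E) {ε : ℝ} (hε : 0 < ε) :
    ∃ y ∈ s, dist x y ^ 2 < infDist x s ^ 2 + ε := by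
  have : infDist x s < √(infDist x s ^ 2 + ε) :=
    (Real.lt_sqrt infDist_nonneg).2 (lt_add_of_pos_right _ hε)
  obtain ⟨y, hys, hy⟩ := (infDist_lt_iff hs).1 this
  exact ⟨y, hys, (Real.lt_sqrt dist_nonneg).1 hy⟩

theorem iInf_dist_sq_eq_infDist_sq (hs : s.Nonempty) (x : E) :
    ⨅ y : s, dist x y ^ 2 = infDist x s ^ 2 := by
  have : Nonempty s := hs.to_subtype
  refine le_antisymm (le_of_forall_pos_lt_add fun ε hε => ?_)
    (le_ciInf fun y => pow_le_pow_left₀ infDist_nonneg (infDist_le_dist_of_mem y.2) 2)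
  obtain ⟨y, hys, hy⟩ := exists_dist_sq_lt_infDist_sq_add hs x hε
  exact (ciInf_le ⟨0, Set.forall_mem_range.2 fun _ => sq_nonneg _⟩ (⟨y, hys⟩ : s)).trans_lt hy

theorem infDist_eq_of_subset_of_subset_closure {t : Set E} (hts : t ⊆ s) (hst : s ⊆ closure t)
    (x : E) : infDist x t = infDist x s :=
  congrArg ENNReal.toReal <|
    le_antisymm (infEDist_closure (s := t) ▸ infEDist_anti hst) (infEDist_anti hts)

variable [MeasurableSpace E] [OpensMeasurableSpace E]

theorem lintegral_infDist_sq_fst_le (π : Measure (E × E)) (hπ : π.snd sᶜ = 0) :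
    ∫⁻ x, ENNReal.ofReal (infDist x s ^ 2) ∂π.fst
      ≤ ∫⁻ q, ENNReal.ofReal (dist q.1 q.2 ^ 2) ∂π := by
  have hsnd : ∀ᵐ q ∂π, q.2 ∈ s :=
    measure_mono_null (fun _ hq => hq) <| nonpos_iff_eq_zero.1 <|
      (Measure.le_map_apply measurable_snd.aemeasurable sᶜ).trans_eq hπ
  rw [Measure.fst, lintegral_map (by fun_prop) measurable_fst]
  refine lintegral_mono_ae (hsnd.mono fun q hq => ?_)
  exact ENNReal.ofReal_le_ofReal (pow_le_pow_left₀ infDist_nonneg (infDist_le_dist_of_mem hq) 2)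

end InfDist

section Coupling

variable {E : Type*} [MetricSpace E] [SecondCountableTopology E] [MeasurableSpace E] [BorelSpace E]
  {s : Set E}

-- A countable range makes `(range T)ᶜ` measurable, so `s` itself need not be.
theorem exists_measurable_dist_sq_lt_infDist_sq_add (hs : s.Nonempty) {ε : ℝ} (hε : 0 < ε) :
    ∃ T : E → E, Measurable T ∧ (Set.range T).Countable ∧ Set.range T ⊆ s ∧
      ∀ x, dist x (T x) ^ 2 < infDist x s ^ 2 + ε := by
  classical
  obtain ⟨t, hts, htc, hst⟩ :=
    (TopologicalSpace.IsSeparable.of_separableSpace s).exists_countable_dense_subset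
  have ht : t.Nonempty := closure_nonempty_iff.1 (hs.mono hst)
  obtain ⟨g, rfl⟩ := htc.exists_eq_range ht
  have hex : ∀ x, ∃ n, dist x (g n) ^ 2 < infDist x s ^ 2 + ε := by
    intro x
    obtain ⟨_, ⟨n, rfl⟩, hn⟩ := exists_dist_sq_lt_infDist_sq_add ht x hε
    exact ⟨n, infDist_eq_of_subset_of_subset_closure hts hst x ▸ hn⟩
  have hfind : Measurable fun x => Nat.find (hex x) :=
    measurable_find hex fun n => measurableSet_lt (by fun_prop)
      ((continuous_infDist_pt s).measurable.pow_const 2 |>.add_const ε)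
  refine ⟨fun x => g (Nat.find (hex x)), measurable_from_top.comp hfind,
    (Set.countable_range g).mono ?_, ?_, fun x => Nat.find_spec (hex x)⟩
  · rintro _ ⟨x, rfl⟩; exact ⟨_, rfl⟩
  · rintro _ ⟨x, rfl⟩; exact hts ⟨_, rfl⟩

theorem exists_coupling_lintegral_dist_sq_le (hs : s.Nonempty) (μ : Measure E)
    [IsProbabilityMeasure μ] {ε : ℝ≥0} (hε : 0 < ε) :
    ∃ π : Measure (E × E), IsProbabilityMeasure π.snd ∧ π.snd sᶜ = 0 ∧ π.fst = μ ∧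
      ∫⁻ q, ENNReal.ofReal (dist q.1 q.2 ^ 2) ∂π
        ≤ ∫⁻ x, ENNReal.ofReal (infDist x s ^ 2) ∂μ + ε := by
  obtain ⟨T, hT, hTc, hTs, hTx⟩ :=
    exists_measurable_dist_sq_lt_infDist_sq_add hs (NNReal.coe_pos.2 hε)
  have hgraph : Measurable fun x => (x, T x) := measurable_id.prodMk hT
  have hsnd : (μ.map fun x => (x, T x)).snd = μ.map T := Measure.snd_map_prodMk measurable_id
  refine ⟨μ.map fun x => (x, T x), ?_, ?_, ?_, ?_⟩
  · rw [hsnd]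
    exact Measure.isProbabilityMeasure_map hT.aemeasurable
  · rw [hsnd]
    refine measure_mono_null (Set.compl_subset_compl.2 hTs) ?_
    rw [Measure.map_apply hT hTc.measurableSet.compl]
    simp
  · rw [Measure.fst_map_prodMk hT, Measure.map_id']
  · rw [lintegral_map (by fun_prop) hgraph]
    calc ∫⁻ x, ENNReal.ofReal (dist x (T x) ^ 2) ∂μ
        ≤ ∫⁻ x, (ENNReal.ofReal (infDist x s ^ 2) + ε) ∂μ :=
          lintegral_mono fun x => (ENNReal.ofReal_le_ofReal (hTx x).le).trans
            (ENNReal.ofReal_add_le.trans_eq (by rw [ENNReal.ofReal_coe_nnreal]))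
      _ = ∫⁻ x, ENNReal.ofReal (infDist x s ^ 2) ∂μ + ε := by
          rw [lintegral_add_right _ measurable_const, lintegral_const, measure_univ, mul_one]

end Coupling

theorem stmt_16_general (N : ℕ) (S : Set (EuclideanSpace ℝ (Fin N)))
    (hS : S.Nonempty)
    (μ : Measure (EuclideanSpace ℝ (Fin N))) [IsProbabilityMeasure μ] :
    (⨅ (ν : Measure (EuclideanSpace ℝ (Fin N))) (_ : IsProbabilityMeasure ν)
        (_ : ν Sᶜ = 0)
        (π : Measure (EuclideanSpace ℝ (Fin N) × EuclideanSpace ℝ (Fin N)))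
        (_ : π.fst = μ) (_ : π.snd = ν),
          ∫⁻ q, ENNReal.ofReal (‖q.1 - q.2‖ ^ 2) ∂π)
      = ∫⁻ x, ENNReal.ofReal (⨅ z : S, ‖x - (z : EuclideanSpace ℝ (Fin N))‖ ^ 2) ∂μ := by
  simp only [← dist_eq_norm, iInf_dist_sq_eq_infDist_sq hS]
  refine le_antisymm (ENNReal.le_of_forall_pos_le_add fun ε hε _ => ?_) ?_
  · obtain ⟨π, hν, hνS, hfst, hcost⟩ := exists_coupling_lintegral_dist_sq_le hS μ hε
    refine le_trans ?_ hcost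
    exact iInf₂_le_of_le π.snd hν <| iInf₂_le_of_le hνS π <|
      iInf₂_le_of_le hfst (rfl : π.snd = π.snd) le_rfl
  · refine le_iInf₂ fun ν _ => le_iInf₂ fun hνS π => le_iInf₂ fun hfst hsnd => ?_
    rw [← hfst]
    exact lintegral_infDist_sq_fst_le π (hsnd ▸ hνS)

/-- **The representation gap is a transport cost.** Let `S ⊂ ℝ^N` be nonempty and compact
and let `μ` be a Borel probability measure with finite second moment. Then the infimum,
over probability measures `ν` supported in `S` and couplings `π` of `(μ, ν)`, of
`∫ ‖x − y‖² dπ(x,y)` equals `∫ min_{z∈S} ‖x − z‖² dμ(x)`. -/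
theorem stmt_16 (N : ℕ) (S : Set (EuclideanSpace ℝ (Fin N)))
    (hS : S.Nonempty) (hScomp : IsCompact S)
    (μ : Measure (EuclideanSpace ℝ (Fin N))) [IsProbabilityMeasure μ]
    (hmom : (∫⁻ x, ENNReal.ofReal (‖x‖ ^ 2) ∂μ) < ⊤) :
    (⨅ (ν : Measure (EuclideanSpace ℝ (Fin N))) (_ : IsProbabilityMeasure ν)
        (_ : ν Sᶜ = 0)
        (π : Measure (EuclideanSpace ℝ (Fin N) × EuclideanSpace ℝ (Fin N)))
        (_ : π.fst = μ) (_ : π.snd = ν),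
          ∫⁻ q, ENNReal.ofReal (‖q.1 - q.2‖ ^ 2) ∂π)
      = ∫⁻ x, ENNReal.ofReal (⨅ z : S, ‖x - (z : EuclideanSpace ℝ (Fin N))‖ ^ 2) ∂μ :=
  stmt_16_general N S hS μ
end
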